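/- arXiv:1309.7450 — 5 statements merged into one kernel-verified Lean document; each statement's English description precedes it below -/
import Mathlib

section
/- Let p > 0, M ∈ ℝ, and let h : (0,∞) → ℝ be continuously differentiable with lim_{t→0⁺} h(t) = h₀ ∈ ℝ, lim_{t→+∞} h(t) = −∞, and h'(t) ≤ (p h(t) + M)/t for all t > 0. Then for every ρ < min{h₀, −M/p} there exists a unique t_ρ > 0 such that h(t_ρ) = ρ; moreover h'(t) < 0 at every t with h(t) = ρ. -/
open Filter Set

/-! Put `k = h + M/p`. The differential inequality says `k' ≤ p k / t`, i.e. `t ↦ k(t) t^{-p}` is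
nonincreasing on `(0,∞)`. At a point where `h = ρ` we have `k = c := ρ + M/p < 0`, so the
nonincreasing function `k(t) t^{-p}` agrees there with the strictly increasing `c t^{-p}`; this can
happen at most once. The same sign of `c` gives `h' ≤ p c / t < 0` at such a point, and the level
is attained by the intermediate value theorem, as `h` runs from `h₀ > ρ` down to `−∞`. -/

theorem antitoneOn_mul_rpow_neg_of_deriv_le {f f' : ℝ → ℝ} {p : ℝ}
    (hf : ∀ t : ℝ, 0 < t → HasDerivAt f (f' t) t) (hle : ∀ t : ℝ, 0 < t → f' t ≤ p * f t / t) :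
    AntitoneOn (fun t => f t * t ^ (-p)) (Ioi 0) := by
  have hderiv : ∀ t : ℝ, 0 < t → HasDerivAt (fun t => f t * t ^ (-p))
      (t ^ (-p) * (f' t - p * f t / t)) t := by
    intro t ht
    refine ((hf t ht).mul (Real.hasDerivAt_rpow_const (p := -p) (Or.inl ht.ne'))).congr_deriv ?_
    rw [Real.rpow_sub_one ht.ne']
    ring
  refine antitoneOn_of_hasDerivWithinAt_nonpos (f' := fun t => t ^ (-p) * (f' t - p * f t / t))
    (convex_Ioi 0)
    (fun t ht => (hderiv t ht).continuousAt.continuousWithinAt) ?_ ?_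
  · intro t ht
    rw [interior_Ioi] at ht ⊢
    exact (hderiv t ht).hasDerivWithinAt
  · intro t ht
    rw [interior_Ioi] at ht
    exact mul_nonpos_of_nonneg_of_nonpos (Real.rpow_nonneg ht.le _)
      (sub_nonpos.2 (hle t ht))

theorem subsingleton_level_of_antitoneOn_mul_rpow_neg {k : ℝ → ℝ} {p c : ℝ} (hp : 0 < p)
    (hc : c < 0) (hk : AntitoneOn (fun t => k t * t ^ (-p)) (Ioi 0)) :
    {t : ℝ | 0 < t ∧ k t = c}.Subsingleton := by
  have key : ∀ s u : ℝ, 0 < s → k s = c → k u = c → s < u → False := by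
    intro s u hs hks hku hsu
    have hanti : c * u ^ (-p) ≤ c * s ^ (-p) := by
      simpa only [hks, hku] using hk (mem_Ioi.2 hs) (mem_Ioi.2 (hs.trans hsu)) hsu.le
    have hpow : u ^ (-p) < s ^ (-p) := Real.rpow_lt_rpow_of_neg hs hsu (neg_neg_of_pos hp)
    nlinarith
  rintro s ⟨hs, hks⟩ u ⟨hu, hku⟩
  rcases lt_trichotomy s u with hsu | rfl | hus
  · exact (key s u hs hks hku hsu).elim
  · rfl
  · exact (key u s hu hku hks hus).elim

theorem unique_level_crossing_general (p M h₀ : ℝ) (hp : 0 < p) (h h' : ℝ → ℝ)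
    (hderiv : ∀ t : ℝ, 0 < t → HasDerivAt h (h' t) t)
    (hlim0 : Filter.Tendsto h (nhdsWithin 0 (Set.Ioi 0)) (nhds h₀))
    (hlimtop : Filter.Tendsto h Filter.atTop Filter.atBot)
    (hineq : ∀ t : ℝ, 0 < t → h' t ≤ (p * h t + M) / t) :
    ∀ ρ : ℝ, ρ < min h₀ (-M / p) →
      (∃! t : ℝ, 0 < t ∧ h t = ρ) ∧ (∀ t : ℝ, 0 < t → h t = ρ → h' t < 0) := by
  intro ρ hρ
  obtain ⟨hρh₀, hρM⟩ := lt_min_iff.1 hρ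
  have hc : ρ + M / p < 0 := by
    rw [neg_div] at hρM
    linarith
  have hineq' : ∀ t : ℝ, 0 < t → h' t ≤ p * (h t + M / p) / t := fun t ht => by
    rw [mul_add, mul_div_cancel₀ _ hp.ne']
    exact hineq t ht
  have hcrossing_deriv : ∀ t : ℝ, 0 < t → h t = ρ → h' t < 0 := fun t ht hρt =>
    (hineq' t ht).trans_lt (div_neg_of_neg_of_pos (hρt ▸ mul_neg_of_pos_of_neg hp hc) ht)
  refine ⟨?_, hcrossing_deriv⟩
  obtain ⟨t, ht, hρt⟩ : ρ ∈ h '' Ioi 0 :=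
    isPreconnected_Ioi.intermediate_value_Iio (l₂ := nhdsWithin 0 (Ioi 0))
      (le_principal_iff.2 (Ioi_mem_atTop 0)) inf_le_right
      (fun t ht => (hderiv t ht).continuousAt.continuousWithinAt) hlimtop hlim0 hρh₀
  have hanti := antitoneOn_mul_rpow_neg_of_deriv_le (f := fun t => h t + M / p)
    (fun t ht => (hderiv t ht).add_const _) hineq'
  have hunique := subsingleton_level_of_antitoneOn_mul_rpow_neg hp hc hanti
  exact ⟨t, ⟨ht, hρt⟩, fun u ⟨hu, hρu⟩ =>
    hunique ⟨hu, congrArg (· + M / p) hρu⟩ ⟨ht, congrArg (· + M / p) hρt⟩⟩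

/-- The one-dimensional core of the construction of the radial retraction: if `h` is `C¹` on
`(0,∞)` with `h(t) → h₀` as `t → 0⁺`, `h(t) → −∞` as `t → +∞`, and
`h'(t) ≤ (p h(t) + M)/t` for all `t > 0`, then every level `ρ < min{h₀, −M/p}` is attained at
a unique `t_ρ > 0`; moreover `h' < 0` at every point where `h = ρ`. -/
theorem unique_level_crossing (p M h₀ : ℝ) (hp : 0 < p) (h h' : ℝ → ℝ)
    (hderiv : ∀ t : ℝ, 0 < t → HasDerivAt h (h' t) t)
    (hcont : ContinuousOn h' (Set.Ioi 0))
    (hlim0 : Filter.Tendsto h (nhdsWithin 0 (Set.Ioi 0)) (nhds h₀))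
    (hlimtop : Filter.Tendsto h Filter.atTop Filter.atBot)
    (hineq : ∀ t : ℝ, 0 < t → h' t ≤ (p * h t + M) / t) :
    ∀ ρ : ℝ, ρ < min h₀ (-M / p) →
      (∃! t : ℝ, 0 < t ∧ h t = ρ) ∧ (∀ t : ℝ, 0 < t → h t = ρ → h' t < 0) :=
  unique_level_crossing_general p M h₀ hp h h' hderiv hlim0 hlimtop hineq
end

section
/- Let g : [0,1] → ℝ be continuous, differentiable on (0,1], with g(1) = 0, and assume that g'(t) > 0 for every t ∈ (0,1] with g(t) = 0. Then g(t) ≤ 0 for all t ∈ [0,1]. -/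
open Set

/-- If `g : [0,1] → ℝ` is continuous, differentiable on `(0,1]`, `g(1) = 0`, and `g'(t) > 0`
at every `t ∈ (0,1]` with `g(t) = 0`, then `g(t) ≤ 0` for all `t ∈ [0,1]`. -/
theorem nonpositive_of_deriv_pos_at_zeros (g g' : ℝ → ℝ)
    (hcont : ContinuousOn g (Set.Icc 0 1))
    (hderiv : ∀ t ∈ Set.Ioc (0:ℝ) 1, HasDerivWithinAt g (g' t) (Set.Iic 1) t)
    (hg1 : g 1 = 0)
    (hpos : ∀ t ∈ Set.Ioc (0:ℝ) 1, g t = 0 → 0 < g' t) :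
    ∀ t ∈ Set.Icc (0:ℝ) 1, g t ≤ 0 := by
  by_contra h
  push_neg at h
  obtain ⟨t₀, ht₀, hgt₀⟩ := h
  set S : Set ℝ := Icc t₀ 1 ∩ g ⁻¹' {0} with hSdef
  have hsub : Icc t₀ 1 ⊆ Icc 0 1 := Icc_subset_Icc ht₀.1 le_rfl
  have hne : S.Nonempty := ⟨1, ⟨ht₀.2, le_rfl⟩, hg1⟩
  have hclosed : IsClosed S :=
    (hcont.mono hsub).preimage_isClosed_of_isClosed isClosed_Icc isClosed_singleton
  have hbdd : BddBelow S := ⟨t₀, fun x hx => hx.1.1⟩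
  set s := sInf S with hs
  have hsmem : s ∈ S := hclosed.csInf_mem hne hbdd
  have hgs : g s = 0 := hsmem.2
  have hs1 : s ≤ 1 := hsmem.1.2
  have ht₀s : t₀ < s := by
    rcases lt_or_eq_of_le hsmem.1.1 with h' | h'
    · exact h'
    · exfalso; rw [← h'] at hgs; linarith
  have hspos : 0 < s := lt_of_le_of_lt ht₀.1 ht₀s
  -- g > 0 on [t₀, s)
  have hposIco : ∀ t ∈ Ico t₀ s, 0 < g t := by
    intro t ht
    by_contra hle
    push_neg at hle
    have hcont' : ContinuousOn g (Icc t₀ t) :=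
      hcont.mono (Icc_subset_Icc ht₀.1 (le_trans ht.2.le hs1))
    have h0 : (0:ℝ) ∈ Icc (g t) (g t₀) := ⟨hle, hgt₀.le⟩
    obtain ⟨c, hc, hgc⟩ := intermediate_value_Icc' ht.1 hcont' h0
    have hcS : c ∈ S := ⟨⟨hc.1, le_trans hc.2 (le_trans ht.2.le hs1)⟩, hgc⟩
    have := csInf_le hbdd hcS
    have : s ≤ t := le_trans this hc.2
    exact absurd ht.2 (not_lt.mpr this)
  -- positive derivative at s
  have hgs' : 0 < g' s := hpos s ⟨hspos, hs1⟩ hgs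
  have hslope : Filter.Tendsto (slope g s) (nhdsWithin s (Iic 1 \ {s})) (nhds (g' s)) :=
    (hasDerivWithinAt_iff_tendsto_slope).mp (hderiv s ⟨hspos, hs1⟩)
  have hmono : nhdsWithin s (Iio s) ≤ nhdsWithin s (Iic 1 \ {s}) :=
    nhdsWithin_mono s (fun x hx => ⟨le_trans hx.le hs1, ne_of_lt hx⟩)
  have hev1 : ∀ᶠ t in nhdsWithin s (Iio s), 0 < slope g s t :=
    hmono (hslope.eventually (eventually_gt_nhds hgs'))
  have hev2 : ∀ᶠ t in nhdsWithin s (Iio s), t ∈ Ioo t₀ s :=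
    Ioo_mem_nhdsLT_of_mem ⟨ht₀s, le_rfl⟩
  obtain ⟨t, hslt, htI⟩ := ((hev1.and hev2).exists)
  have hgt : 0 < g t := hposIco t ⟨htI.1.le, htI.2⟩
  have hts : t - s < 0 := sub_neg.mpr htI.2
  have : slope g s t = (g t - g s) / (t - s) := slope_def_field g s t
  rw [this, hgs, sub_zero] at hslt
  have : g t < 0 := by
    have := (div_pos_iff).mp hslt
    rcases this with ⟨h1, h2⟩ | ⟨h1, h2⟩
    · linarith
    · exact h1
  linarith
end

section
/- Let g : [0,1] → ℝ be continuous, differentiable on (0,1), with g(0) = 0, g(1) > 0, g(t) < 0 for all sufficiently small t > 0, and assume that g'(t) > 0 for every t ∈ (0,1) with g(t) = 0. Then there exists a unique t_* ∈ (0,1) with g(t_*) = 0; moreover g(t) < 0 for all t ∈ (0, t_*) and g(t) > 0 for all t ∈ (t_*, 1]. -/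
open Filter Set

lemma cross_aux (g : ℝ → ℝ) {c u : ℝ} (h : HasDerivAt g c u) (hc : 0 < c) (hu : g u = 0) :
    ∃ δ > 0, (∀ t, u < t → t < u + δ → 0 < g t) ∧ (∀ t, u - δ < t → t < u → g t < 0) := by
  have hs := hasDerivAt_iff_tendsto_slope.mp h
  have hev : ∀ᶠ t in nhdsWithin u {u}ᶜ, 0 < slope g u t := hs.eventually (eventually_gt_nhds hc)
  rw [eventually_nhdsWithin_iff] at hev
  rcases Metric.eventually_nhds_iff.mp hev with ⟨δ, hδ, H⟩
  have key : ∀ t, t ≠ u → dist t u < δ → 0 < g t / (t - u) := by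
    intro t ht hd
    have := H hd ht
    rwa [slope_def_field, hu, sub_zero] at this
  refine ⟨δ, hδ, ?_, ?_⟩
  · intro t h1 h2
    have hd : dist t u < δ := by rw [Real.dist_eq, abs_of_pos (by linarith)]; linarith
    have := key t (by linarith [h1.ne']) hd
    rcases div_pos_iff.mp this with ⟨h, _⟩ | ⟨_, h⟩
    · exact h
    · linarith
  · intro t h1 h2
    have hd : dist t u < δ := by rw [Real.dist_eq, abs_of_neg (by linarith)]; linarith
    have := key t (by linarith [h2.ne]) hd
    rcases div_pos_iff.mp this with ⟨_, h⟩ | ⟨h, _⟩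
    · linarith
    · exact h


/-- The one-dimensional content of the existence and uniqueness of the crossing parameter:
if `g : [0,1] → ℝ` is continuous, differentiable on `(0,1)`, `g(0) = 0`, `g(1) > 0`,
`g(t) < 0` for all sufficiently small `t > 0`, and `g'(t) > 0` at every `t ∈ (0,1)` with
`g(t) = 0`, then there is a unique `t_* ∈ (0,1)` with `g(t_*) = 0`; moreover `g < 0` on
`(0, t_*)` and `g > 0` on `(t_*, 1]`. -/
theorem unique_crossing_parameter (g g' : ℝ → ℝ)
    (hcont : ContinuousOn g (Set.Icc 0 1))
    (hderiv : ∀ t ∈ Set.Ioo (0:ℝ) 1, HasDerivAt g (g' t) t)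
    (hg0 : g 0 = 0) (hg1 : 0 < g 1)
    (hsmall : ∀ᶠ t in nhdsWithin 0 (Set.Ioi 0), g t < 0)
    (hpos : ∀ t ∈ Set.Ioo (0:ℝ) 1, g t = 0 → 0 < g' t) :
    ∃ tstar ∈ Set.Ioo (0:ℝ) 1, g tstar = 0 ∧
      (∀ t ∈ Set.Ioo (0:ℝ) 1, g t = 0 → t = tstar) ∧
      (∀ t ∈ Set.Ioo (0:ℝ) tstar, g t < 0) ∧
      (∀ t ∈ Set.Ioc tstar 1, 0 < g t) := by
  -- small negative interval
  obtain ⟨ε0, hε0, hnegsub⟩ := mem_nhdsGT_iff_exists_Ioc_subset.mp hsmall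
  set ε : ℝ := min ε0 (1/2) with hεdef
  have hε : 0 < ε := lt_min hε0 (by norm_num)
  have hε1 : ε < 1 := lt_of_le_of_lt (min_le_right _ _) (by norm_num)
  have hneg : ∀ t, 0 < t → t ≤ ε → g t < 0 := fun t h1 h2 =>
    hnegsub ⟨h1, le_trans h2 (min_le_left _ _)⟩
  -- the crossing point
  set A : Set ℝ := Icc ε 1 ∩ g ⁻¹' (Ici 0) with hAdef
  have hAclosed : IsClosed A :=
    (hcont.mono (Icc_subset_Icc hε.le le_rfl)).preimage_isClosed_of_isClosed isClosed_Icc isClosed_Ici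
  have hA1 : (1:ℝ) ∈ A := ⟨⟨hε1.le, le_rfl⟩, hg1.le⟩
  have hAbdd : BddBelow A := ⟨ε, fun x hx => hx.1.1⟩
  set tstar : ℝ := sInf A with htdef
  have htmem : tstar ∈ A := hAclosed.csInf_mem ⟨1, hA1⟩ hAbdd
  have htge : ε ≤ tstar := htmem.1.1
  have htle : tstar ≤ 1 := htmem.1.2
  have ht0 : 0 < tstar := lt_of_lt_of_le hε htge
  -- g < 0 on (0, tstar)
  have hnegI : ∀ t, 0 < t → t < tstar → g t < 0 := by
    intro t h1 h2
    rcases le_or_gt t ε with h | h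
    · exact hneg t h1 h
    · by_contra hcon
      push_neg at hcon
      exact absurd (csInf_le hAbdd ⟨⟨h.le, le_trans h2.le htle⟩, hcon⟩) (not_le.mpr h2)
  -- g tstar = 0
  have hεlt : ε < tstar := lt_of_le_of_ne htge (fun h => absurd htmem.2 (not_le.mpr (h ▸ hneg ε hε le_rfl)))
  have hgt0 : g tstar = 0 := by
    obtain ⟨w, hw, hgw⟩ := intermediate_value_Icc htge (hcont.mono (Icc_subset_Icc hε.le htle))
      (⟨(hneg ε hε le_rfl).le, htmem.2⟩ : (0:ℝ) ∈ Icc (g ε) (g tstar))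
    have : tstar ≤ w := csInf_le hAbdd ⟨⟨hw.1, le_trans hw.2 htle⟩, hgw.ge⟩
    rw [← le_antisymm hw.2 this]; exact hgw
  have ht1 : tstar < 1 := lt_of_le_of_ne htle (fun h => by rw [h] at hgt0; linarith)
  have htIoo : tstar ∈ Ioo (0:ℝ) 1 := ⟨ht0, ht1⟩
  -- g > 0 on (tstar, 1]
  have hposI : ∀ t ∈ Ioc tstar 1, 0 < g t := by
    by_contra hcon
    push_neg at hcon
    obtain ⟨s, hs, hgs⟩ := hcon
    obtain ⟨δ0, hδ0, hright, _⟩ :=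
      cross_aux g (hderiv tstar htIoo) (hpos tstar htIoo hgt0) hgt0
    set t0 : ℝ := min (tstar + δ0/2) ((tstar + s)/2) with ht0def
    have ht0gt : tstar < t0 := lt_min (by linarith) (by linarith [hs.1])
    have ht0lt : t0 < s := lt_of_le_of_lt (min_le_right _ _) (by linarith [hs.1])
    have hgt0pos : 0 < g t0 :=
      hright t0 ht0gt (lt_of_le_of_lt (min_le_left _ _) (by linarith))
    set B : Set ℝ := Icc t0 s ∩ g ⁻¹' (Iic 0) with hBdef
    have hBclosed : IsClosed B :=
      (hcont.mono (Icc_subset_Icc (by linarith) hs.2)).preimage_isClosed_of_isClosed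
        isClosed_Icc isClosed_Iic
    have hBs : s ∈ B := ⟨⟨ht0lt.le, le_rfl⟩, hgs⟩
    have hBbdd : BddBelow B := ⟨t0, fun x hx => hx.1.1⟩
    set u : ℝ := sInf B with hudef
    have humem : u ∈ B := hBclosed.csInf_mem ⟨s, hBs⟩ hBbdd
    have hposIco : ∀ t, t0 ≤ t → t < u → 0 < g t := by
      intro t h1 h2
      by_contra hc
      push_neg at hc
      exact absurd (csInf_le hBbdd ⟨⟨h1, le_trans h2.le humem.1.2⟩, hc⟩) (not_le.mpr h2)
    -- IVT on [t0, u]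
    obtain ⟨w, hw, hgw⟩ := intermediate_value_Icc' humem.1.1
      (hcont.mono (Icc_subset_Icc (by linarith) (le_trans humem.1.2 hs.2)))
      (⟨humem.2, hgt0pos.le⟩ : (0:ℝ) ∈ Icc (g u) (g t0))
    have hwgt : t0 < w := lt_of_le_of_ne hw.1 (fun h => by rw [h] at hgt0pos; linarith)
    have hwle1 : w ≤ 1 := le_trans hw.2 (le_trans humem.1.2 hs.2)
    have hwlt1 : w < 1 := lt_of_le_of_ne hwle1 (fun h => by rw [h] at hgw; linarith)
    have hwIoo : w ∈ Ioo (0:ℝ) 1 := ⟨by linarith, hwlt1⟩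
    obtain ⟨δ1, hδ1, _, hleft⟩ := cross_aux g (hderiv w hwIoo) (hpos w hwIoo hgw) hgw
    set t1 : ℝ := max t0 (w - δ1/2) with ht1def
    have ht1lt : t1 < w := max_lt hwgt (by linarith)
    have ht1gt : w - δ1 < t1 := lt_of_lt_of_le (by linarith) (le_max_right _ _)
    have h1 : 0 < g t1 := hposIco t1 (le_max_left _ _) (lt_of_lt_of_le ht1lt hw.2)
    have h2 : g t1 < 0 := hleft t1 ht1gt ht1lt
    linarith
  refine ⟨tstar, htIoo, hgt0, ?_, fun t ht => hnegI t ht.1 ht.2, hposI⟩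
  intro t ht hgt
  rcases lt_trichotomy t tstar with h | h | h
  · exact absurd (hnegI t ht.1 h) (by rw [hgt]; exact lt_irrefl 0)
  · exact h
  · exact absurd (hposI t ⟨h, ht.2.le⟩) (by rw [hgt]; exact lt_irrefl 0)
end

section
/- Let f : ℝ → ℝ be continuous, set F(s) = ∫₀^s f(t) dt, and let ζ > 1 and δ > 0 be such that ζ F(s) ≥ f(s)s > 0 for all s with 0 < |s| ≤ δ. Then F(δ) > 0, F(−δ) > 0, and F(s) ≥ M₁₉ |s|^ζ for all |s| ≤ δ, where M₁₉ = min{F(δ), F(−δ)}/δ^ζ > 0. -/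
open Filter Set

lemma near_zero_aux (ζ δ : ℝ) (hζ : 1 < ζ) (hδ : 0 < δ)
    (f F : ℝ → ℝ) (hf : Continuous f)
    (hF : ∀ s : ℝ, F s = ∫ t in (0:ℝ)..s, f t)
    (hyp : ∀ s : ℝ, 0 < s → s ≤ δ → f s * s ≤ ζ * F s) :
    ∀ s : ℝ, 0 < s → s ≤ δ → F δ / δ ^ ζ * s ^ ζ ≤ F s := by
  have hFeq : F = fun s => ∫ t in (0:ℝ)..s, f t := funext hF
  have hFd : ∀ x : ℝ, HasDerivAt F (f x) x := by
    intro x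
    rw [hFeq]
    exact (hf.integral_hasStrictDerivAt 0 x).hasDerivAt
  intro s hs hsδ
  set G : ℝ → ℝ := fun x => F x / x ^ ζ with hG
  have hGd : ∀ x : ℝ, 0 < x →
      HasDerivAt G ((f x * x ^ ζ - F x * (ζ * x ^ (ζ - 1))) / (x ^ ζ) ^ 2) x := by
    intro x hx
    exact (hFd x).div (Real.hasDerivAt_rpow_const (Or.inl hx.ne'))
      (Real.rpow_pos_of_pos hx ζ).ne'
  have hanti : AntitoneOn G (Icc s δ) := by
    apply antitoneOn_of_deriv_nonpos (convex_Icc s δ)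
    · intro x hx
      exact (hGd x (lt_of_lt_of_le hs hx.1)).continuousAt.continuousWithinAt
    · intro x hx
      rw [interior_Icc] at hx
      exact ((hGd x (hs.trans hx.1)).differentiableAt).differentiableWithinAt
    · intro x hx
      rw [interior_Icc] at hx
      have hx0 : 0 < x := hs.trans hx.1
      rw [(hGd x hx0).deriv]
      apply div_nonpos_of_nonpos_of_nonneg _ (sq_nonneg _)
      have hxz : x ^ ζ = x ^ (ζ - 1) * x := by
        rw [← Real.rpow_add_one hx0.ne' (ζ - 1)]
        ring_nf
      have hle : f x * x ≤ ζ * F x := hyp x hx0 hx.2.le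
      have hnn : (0:ℝ) ≤ x ^ (ζ - 1) := (Real.rpow_pos_of_pos hx0 _).le
      rw [hxz]
      nlinarith [mul_nonneg hnn (sub_nonneg.2 hle)]
  have hGle : G δ ≤ G s := hanti ⟨le_rfl, hsδ⟩ ⟨hsδ, le_rfl⟩ hsδ
  have hspos : (0:ℝ) < s ^ ζ := Real.rpow_pos_of_pos hs ζ
  have := mul_le_mul_of_nonneg_right hGle hspos.le
  simpa [hG, div_mul_cancel₀ (F s) hspos.ne'] using this

/-- Consequence of the near-zero hypothesis H(f)₂(iv): if `ζ F(s) ≥ f(s)s > 0` for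
`0 < |s| ≤ δ`, then `F(δ) > 0`, `F(−δ) > 0`, and `F(s) ≥ M₁₉ |s|^ζ` for all `|s| ≤ δ`,
where `M₁₉ = min{F(δ), F(−δ)}/δ^ζ > 0`. -/
theorem near_zero_lower_bound (ζ δ : ℝ) (hζ : 1 < ζ) (hδ : 0 < δ)
    (f F : ℝ → ℝ) (hf : Continuous f)
    (hF : ∀ s : ℝ, F s = ∫ t in (0:ℝ)..s, f t)
    (hyp : ∀ s : ℝ, 0 < |s| → |s| ≤ δ → 0 < f s * s ∧ f s * s ≤ ζ * F s) :
    0 < F δ ∧ 0 < F (-δ) ∧ 0 < min (F δ) (F (-δ)) / δ ^ ζ ∧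
      ∀ s : ℝ, |s| ≤ δ → min (F δ) (F (-δ)) / δ ^ ζ * |s| ^ ζ ≤ F s := by
  have habsδ : |δ| = δ := abs_of_pos hδ
  have habsmδ : |(-δ)| = δ := by rw [abs_neg, habsδ]
  have hζ0 : 0 < ζ := lt_trans one_pos hζ
  have hFδ : 0 < F δ := by
    obtain ⟨h1, h2⟩ := hyp δ (by rw [habsδ]; exact hδ) habsδ.le
    nlinarith
  have hFmδ : 0 < F (-δ) := by
    obtain ⟨h1, h2⟩ := hyp (-δ) (by rw [habsmδ]; exact hδ) habsmδ.le
    nlinarith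
  have hδζ : 0 < δ ^ ζ := Real.rpow_pos_of_pos hδ ζ
  have hM : 0 < min (F δ) (F (-δ)) / δ ^ ζ := div_pos (lt_min hFδ hFmδ) hδζ
  refine ⟨hFδ, hFmδ, hM, ?_⟩
  intro s hs
  rcases lt_trichotomy s 0 with hneg | hzero | hpos
  · -- negative side: apply aux to x ↦ -f (-x), x ↦ F (-x)
    set g : ℝ → ℝ := fun t => -f (-t) with hg
    set Fg : ℝ → ℝ := fun t => F (-t) with hFg
    have hgc : Continuous g := (hf.comp continuous_neg).neg
    have hFgeq : ∀ u : ℝ, Fg u = ∫ t in (0:ℝ)..u, g t := by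
      intro u
      have : (∫ t in (0:ℝ)..u, f (-t)) = ∫ t in (-u)..(0:ℝ), f t := by
        simpa using intervalIntegral.integral_comp_neg (a := 0) (b := u) f
      simp only [hFg, hg, intervalIntegral.integral_neg, this,
        intervalIntegral.integral_symm (-u) 0, hF (-u), neg_neg]
    have hgyp : ∀ u : ℝ, 0 < u → u ≤ δ → g u * u ≤ ζ * Fg u := by
      intro u hu huδ
      have habs : |(-u)| = u := by rw [abs_neg, abs_of_pos hu]
      have := (hyp (-u) (by rw [habs]; exact hu) (habs.le.trans huδ)).2
      simp only [hg, hFg, neg_neg]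
      nlinarith
    have haux := near_zero_aux ζ δ hζ hδ g Fg hgc hFgeq hgyp (-s) (by linarith)
      (by rw [← abs_of_pos (show (0:ℝ) < -s by linarith), abs_neg]; exact hs)
    have habss : |s| = -s := abs_of_neg hneg
    have hFgδ : Fg δ = F (-δ) := rfl
    have hFgs : Fg (-s) = F s := by simp [hFg]
    rw [habss]
    calc min (F δ) (F (-δ)) / δ ^ ζ * (-s) ^ ζ
        ≤ F (-δ) / δ ^ ζ * (-s) ^ ζ := by
          apply mul_le_mul_of_nonneg_right _ (Real.rpow_pos_of_pos (by linarith) ζ).le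
          exact div_le_div_of_nonneg_right (min_le_right _ _) hδζ.le
      _ ≤ F s := by rw [← hFgδ, ← hFgs]; exact haux
  · simp only [hzero, abs_zero, hF 0, intervalIntegral.integral_same]
    rw [Real.zero_rpow (by linarith)]
    simp
  · have habss : |s| = s := abs_of_pos hpos
    rw [habss] at hs ⊢
    have haux := near_zero_aux ζ δ hζ hδ f F hf hF (fun u hu huδ => by
      have habs : |u| = u := abs_of_pos hu
      exact (hyp u (by rw [habs]; exact hu) (by rw [habs]; exact huδ)).2) s hpos hs
    calc min (F δ) (F (-δ)) / δ ^ ζ * s ^ ζ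
        ≤ F δ / δ ^ ζ * s ^ ζ := by
          apply mul_le_mul_of_nonneg_right _ (Real.rpow_pos_of_pos hpos ζ).le
          exact div_le_div_of_nonneg_right (min_le_left _ _) hδζ.le
      _ ≤ F s := haux
end

section
/- Let f : ℝ → ℝ be continuous with |f(s)| ≤ a(1 + |s|^{r−1}) for all s ∈ ℝ, where a > 0 and r > 1, set F(s) = ∫₀^s f(t) dt, and let 1 < ζ < r and δ > 0 be such that ζ F(s) ≥ f(s)s > 0 for all 0 < |s| ≤ δ. Then there exist constants M₂₃, M₂₄ > 0 such that F(s) ≥ M₂₃|s|^ζ − M₂₄|s|^r for all s ∈ ℝ. -/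
/-!
Near the origin the differential inequality `f(s) s ≤ ζ F(s)` says that `F(s) |s|^{-ζ}` is
nonincreasing in `|s|`, so `F(s) ≥ c |s|^ζ` on `0 < |s| ≤ δ` with `c > 0` given by `F(±δ) > 0`.
Far from the origin the growth bound gives `F(s) ≥ -a|s| - a|s|^r`, and for `|s| > δ` both
`|s|^ζ` and `|s|` are dominated by multiples of `|s|^r` because `ζ, 1 ≤ r`.
-/

open Set

lemma antitoneOn_mul_rpow_neg {f F : ℝ → ℝ} {ζ s δ : ℝ} (hs : 0 < s)
    (hFd : ∀ t ∈ Icc s δ, HasDerivAt F (f t) t)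
    (hfF : ∀ t ∈ Icc s δ, f t * t ≤ ζ * F t) :
    AntitoneOn (fun t => F t * t ^ (-ζ)) (Icc s δ) := by
  have hpos : ∀ t ∈ Icc s δ, 0 < t := fun t ht => hs.trans_le ht.1
  have hderiv : ∀ t ∈ Icc s δ,
      HasDerivAt (fun t => F t * t ^ (-ζ)) (t ^ (-ζ - 1) * (f t * t - ζ * F t)) t := by
    intro t ht
    refine ((hFd t ht).mul (Real.hasDerivAt_rpow_const (Or.inl (hpos t ht).ne'))).congr_deriv ?_
    have ht0 := (hpos t ht).ne'
    rw [Real.rpow_sub (hpos t ht), Real.rpow_one]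
    field_simp
    ring
  refine antitoneOn_of_hasDerivWithinAt_nonpos (convex_Icc s δ)
    (fun t ht => (hderiv t ht).continuousAt.continuousWithinAt)
    (fun t ht => (hderiv t (interior_subset ht)).hasDerivWithinAt) fun t ht => ?_
  replace ht := interior_subset ht
  exact mul_nonpos_of_nonneg_of_nonpos (Real.rpow_nonneg (hpos t ht).le _)
    (sub_nonpos.2 (hfF t ht))

lemma exists_pos_mul_rpow_le_of_mul_le {f F : ℝ → ℝ} {ζ δ : ℝ} (hζ : 0 < ζ) (hδ : 0 < δ)
    (hFd : ∀ t ∈ Ioc 0 δ, HasDerivAt F (f t) t)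
    (hfF : ∀ t ∈ Ioc 0 δ, 0 < f t * t ∧ f t * t ≤ ζ * F t) :
    ∃ c > 0, ∀ s ∈ Ioc 0 δ, c * s ^ ζ ≤ F s := by
  have hδζ : 0 < δ ^ ζ := Real.rpow_pos_of_pos hδ ζ
  have hFδ : 0 < F δ := by
    obtain ⟨hpos, hle⟩ := hfF δ ⟨hδ, le_rfl⟩
    exact pos_of_mul_pos_right (hpos.trans_le hle) hζ.le
  refine ⟨F δ / δ ^ ζ, div_pos hFδ hδζ, fun s ⟨hs, hsδ⟩ => ?_⟩
  have hsub : Icc s δ ⊆ Ioc 0 δ := Icc_subset_Ioc_iff hsδ |>.2 ⟨hs, le_rfl⟩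
  have hanti := antitoneOn_mul_rpow_neg hs (fun t ht => hFd t (hsub ht))
    (fun t ht => (hfF t (hsub ht)).2) ⟨le_rfl, hsδ⟩ ⟨hsδ, le_rfl⟩ hsδ
  simp only [Real.rpow_neg hs.le, Real.rpow_neg hδ.le, ← div_eq_mul_inv] at hanti
  exact (le_div_iff₀ (Real.rpow_pos_of_pos hs ζ)).1 hanti

lemma exists_pos_mul_abs_rpow_le_of_mul_le {f F : ℝ → ℝ} {ζ δ : ℝ} (hζ : 0 < ζ) (hδ : 0 < δ)
    (hF0 : F 0 = 0) (hFd : ∀ x, HasDerivAt F (f x) x)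
    (hfF : ∀ s, 0 < |s| → |s| ≤ δ → 0 < f s * s ∧ f s * s ≤ ζ * F s) :
    ∃ c > 0, ∀ s, |s| ≤ δ → c * |s| ^ ζ ≤ F s := by
  obtain ⟨c₁, hc₁, hright⟩ := exists_pos_mul_rpow_le_of_mul_le hζ hδ (fun t _ => hFd t)
    fun t ⟨ht, htδ⟩ => hfF t (abs_pos_of_pos ht) ((abs_of_pos ht).trans_le htδ)
  obtain ⟨c₂, hc₂, hleft⟩ := exists_pos_mul_rpow_le_of_mul_le (f := fun t => -f (-t))
    (F := fun t => F (-t)) hζ hδ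
    (fun t _ => ((hFd (-t)).comp t (hasDerivAt_neg t)).congr_deriv (by ring))
    fun t ⟨ht, htδ⟩ => by
      simpa only [neg_mul, mul_neg] using
        hfF (-t) (by simpa using ht.ne') (by rwa [abs_neg, abs_of_pos ht])
  refine ⟨min c₁ c₂, lt_min hc₁ hc₂, fun s hsδ => ?_⟩
  rcases lt_trichotomy s 0 with hs | rfl | hs
  · rw [abs_of_neg hs] at hsδ ⊢
    simpa only [neg_neg] using (mul_le_mul_of_nonneg_right (min_le_right c₁ c₂)
      (Real.rpow_nonneg (neg_nonneg.2 hs.le) ζ)).trans (hleft (-s) ⟨neg_pos.2 hs, hsδ⟩)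
  · simp [hF0, Real.zero_rpow hζ.ne']
  · rw [abs_of_pos hs] at hsδ ⊢
    exact (mul_le_mul_of_nonneg_right (min_le_left c₁ c₂) (Real.rpow_nonneg hs.le ζ)).trans
      (hright s ⟨hs, hsδ⟩)

lemma abs_integral_le_of_abs_le_mul_one_add_rpow {f : ℝ → ℝ} {a r : ℝ} (ha : 0 ≤ a)
    (hr : 1 ≤ r) (hgrowth : ∀ s, |f s| ≤ a * (1 + |s| ^ (r - 1))) (s : ℝ) :
    |∫ t in (0 : ℝ)..s, f t| ≤ a * |s| + a * |s| ^ r := by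
  have hbound : ∀ t ∈ uIoc 0 s, ‖f t‖ ≤ a * (1 + |s| ^ (r - 1)) := fun t ht => by
    have hts : |t| ≤ |s| := by simpa using abs_sub_left_of_mem_uIcc (uIoc_subset_uIcc ht)
    exact (hgrowth t).trans (by gcongr)
  have hpow : |s| ^ (r - 1) * |s| = |s| ^ r := by
    rw [← Real.rpow_add_one' (abs_nonneg s) (by linarith), sub_add_cancel]
  calc |∫ t in (0 : ℝ)..s, f t| ≤ a * (1 + |s| ^ (r - 1)) * |s - 0| :=
        intervalIntegral.norm_integral_le_of_norm_le_const hbound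
    _ = a * |s| + a * |s| ^ r := by rw [sub_zero, ← hpow]; ring

lemma rpow_le_rpow_sub_mul_rpow {x δ p r : ℝ} (hδ : 0 < δ) (hδx : δ ≤ x) (hpr : p ≤ r) :
    x ^ p ≤ δ ^ (p - r) * x ^ r := by
  have hx : 0 < x := hδ.trans_le hδx
  calc x ^ p = x ^ (p - r) * x ^ r := by rw [← Real.rpow_add hx, sub_add_cancel]
    _ ≤ δ ^ (p - r) * x ^ r := mul_le_mul_of_nonneg_right
      (Real.rpow_le_rpow_of_nonpos hδ hδx (sub_nonpos.2 hpr)) (Real.rpow_nonneg hx.le r)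

/-- The global unilateral growth estimate derived from hypotheses H(f)₂(i) and H(f)₂(iv):
if `|f(s)| ≤ a(1 + |s|^{r−1})`, `1 < ζ < r`, and `ζ F(s) ≥ f(s)s > 0` for `0 < |s| ≤ δ`,
then there exist `M₂₃, M₂₄ > 0` with `F(s) ≥ M₂₃|s|^ζ − M₂₄|s|^r` for all `s ∈ ℝ`. -/
theorem global_unilateral_growth (a r ζ δ : ℝ)
    (ha : 0 < a) (hr : 1 < r) (hζ : 1 < ζ) (hζr : ζ < r) (hδ : 0 < δ)
    (f F : ℝ → ℝ) (hf : Continuous f)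
    (hgrowth : ∀ s : ℝ, |f s| ≤ a * (1 + |s| ^ (r - 1)))
    (hF : ∀ s : ℝ, F s = ∫ t in (0:ℝ)..s, f t)
    (hyp : ∀ s : ℝ, 0 < |s| → |s| ≤ δ → 0 < f s * s ∧ f s * s ≤ ζ * F s) :
    ∃ M₂₃ M₂₄ : ℝ, 0 < M₂₃ ∧ 0 < M₂₄ ∧
      ∀ s : ℝ, M₂₃ * |s| ^ ζ - M₂₄ * |s| ^ r ≤ F s := by
  have hFd : ∀ x, HasDerivAt F (f x) x := fun x => by
    rw [funext hF]
    exact (hf.integral_hasStrictDerivAt 0 x).hasDerivAt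
  have hF0 : F 0 = 0 := by rw [hF, intervalIntegral.integral_same]
  obtain ⟨c, hc, hlocal⟩ :=
    exists_pos_mul_abs_rpow_le_of_mul_le (by linarith) hδ hF0 hFd hyp
  refine ⟨c, c * δ ^ (ζ - r) + a * δ ^ (1 - r) + a, hc, by positivity, fun s => ?_⟩
  rcases le_or_gt |s| δ with hsδ | hsδ
  · have : 0 ≤ (c * δ ^ (ζ - r) + a * δ ^ (1 - r) + a) * |s| ^ r := by positivity
    linarith [hlocal s hsδ]
  · have hglobal := neg_le_of_abs_le (hF s ▸ abs_integral_le_of_abs_le_mul_one_add_rpow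
      ha.le hr.le hgrowth s)
    have hζpow := mul_le_mul_of_nonneg_left (rpow_le_rpow_sub_mul_rpow hδ hsδ.le hζr.le) hc.le
    have hlin := mul_le_mul_of_nonneg_left
      (rpow_le_rpow_sub_mul_rpow (p := 1) hδ hsδ.le hr.le) ha.le
    rw [Real.rpow_one] at hlin
    linarith
end
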